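/- The map Φ̂ : R → H, defined recursively by Φ̂(|) = • and Φ̂(∨(t1,…,tn)) = β(Φ̂(t1),…,Φ̂(tn)), is a bijection from the set of reduced planar trees onto the set of planar rooted hypertrees. -/
import Mathlib


/-- Reduced planar trees: the leaf `|`, or `∨(t1,…,tn)` with `n ≥ 2`; the internal
vertex `∨(t1,t2,…,tn)` is encoded as `node t1 t2 [t3,…,tn]`, so that the list of
branches automatically has length at least `2`. -/
inductive R : Type
  | leaf : R
  | node : R → R → List R → R

/-- Planar rooted hypertrees: the single constructor attaches to a root vertex a finite
ordered (left-to-right) list of edges, each edge being a *nonempty* ordered list of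
planar rooted hypertrees; the nonempty list `(t1,…,tm)` of an edge is encoded as the
pair `(t1, [t2,…,tm])`. -/
inductive HT : Type
  | node : List (HT × List HT) → HT

/-- The single-vertex hypertree `•` (a root carrying no edges). -/
def bullet : HT := HT.node []

/-- `β(t1,…,tn)` (for `n ≥ 2`): the hypertree obtained from `tn` by prepending to the
list of edges at the root of `tn` a new leftmost edge given by the list
`(t_{n−1}, t_{n−2}, …, t1)`. -/
def beta (l : List HT) (h : 2 ≤ l.length) : HT :=
  match hr : l.dropLast.reverse with
  | e :: es' =>
      (match l.getLast (fun hnil => by subst hnil; simp at h) with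
       | HT.node es => HT.node ((e, es') :: es))
  | [] => absurd h (by
      have h1 : l.dropLast = [] := by
        have h2 := congrArg List.reverse hr
        simpa using h2
      have h3 : l.dropLast.length = 0 := by rw [h1]; rfl
      rw [List.length_dropLast] at h3
      omega)

mutual
/-- The extension `Φ̂` of Knuth's rotation correspondence to reduced planar trees:
`Φ̂(|) = •` and `Φ̂(∨(t1,…,tn)) = β(Φ̂(t1),…,Φ̂(tn))`. -/
def phiH : R → HT
  | .leaf => bullet
  | .node t1 t2 rest => beta (phiH t1 :: phiH t2 :: phiL rest) (by simp)

/-- `Φ̂` applied to each tree of a list. -/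
def phiL : List R → List HT
  | [] => []
  | u :: us => phiH u :: phiL us
end

lemma phiL_eq (l : List R) : phiL l = l.map phiH := by
  induction l with
  | nil => rfl
  | cons a as ih => rw [phiL, ih, List.map_cons]

lemma beta_cons (xs : List HT) (es : List (HT × List HT)) (hxs : xs ≠ [])
    (h : 2 ≤ (xs ++ [HT.node es]).length) :
    beta (xs ++ [HT.node es]) h
      = HT.node ((xs.getLast hxs, xs.dropLast.reverse) :: es) := by
  have hd : (xs ++ [HT.node es]).dropLast = xs := by simp
  have hrev : xs.reverse = xs.getLast hxs :: xs.dropLast.reverse := by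
    conv_lhs => rw [← List.dropLast_append_getLast hxs]
    simp
  have hgl : (xs ++ [HT.node es]).getLast (by simp) = HT.node es := by simp
  unfold beta
  split
  · rename_i e es' hr
    rw [hd, hrev] at hr
    obtain ⟨rfl, rfl⟩ : xs.getLast hxs = e ∧ xs.dropLast.reverse = es' := by
      exact ⟨(List.cons.injEq _ _ _ _ ▸ hr).1, (List.cons.injEq _ _ _ _ ▸ hr).2⟩
    split
    rename_i es2 hes2
    rw [hgl] at hes2
    cases hes2
    rfl
  · rename_i hr
    exfalso
    rw [hd, hrev] at hr
    cases hr

lemma beta_congr {l l' : List HT} (h : 2 ≤ l.length) (e : l = l') :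
    beta l h = beta l' (e ▸ h) := by subst e; rfl

lemma phiH_node_eq (t1 t2 : R) (rest : List R) :
    phiH (R.node t1 t2 rest) = beta ((t1 :: t2 :: rest).map phiH) (by simp) := by
  rw [phiH]
  exact beta_congr _ (by simp [phiL_eq])

lemma phiH_node' (ta : List R) (tn : R) (hta : ta ≠ []) (es : List (HT × List HT))
    (hes : phiH tn = HT.node es) (t1 t2 : R) (rest : List R)
    (hl : t1 :: t2 :: rest = ta ++ [tn]) :
    phiH (R.node t1 t2 rest)
      = HT.node (((ta.map phiH).getLast (by simpa using hta),
          (ta.map phiH).dropLast.reverse) :: es) := by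
  rw [phiH_node_eq]
  have e1 : (t1 :: t2 :: rest).map phiH = (ta.map phiH) ++ [HT.node es] := by
    rw [hl]; simp [hes]
  rw [beta_congr _ e1, beta_cons]

lemma sizeOf_mem_R {x t1 t2 : R} {r : List R} (hx : x ∈ t1 :: t2 :: r) :
    sizeOf x < sizeOf (R.node t1 t2 r) := by
  simp only [List.mem_cons] at hx
  rcases hx with rfl | rfl | h
  · simp; omega
  · simp; omega
  · have := List.sizeOf_lt_of_mem h
    simp; omega

lemma phiH_node_shape (t1 t2 : R) (rest : List R) :
    ∃ p es, phiH (R.node t1 t2 rest) = HT.node (p :: es) := by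
  have hne : (t1 :: t2 :: rest) ≠ [] := by simp
  have hta : (t1 :: t2 :: rest).dropLast ≠ [] := by
    intro hc
    have := congrArg List.length hc
    simp at this
  cases hes : phiH ((t1 :: t2 :: rest).getLast hne) with
  | node es =>
    exact ⟨_, es, phiH_node' _ _ hta es hes t1 t2 rest
      (List.dropLast_append_getLast hne).symm⟩

lemma map_inj_aux : ∀ (lt ls : List R),
    (∀ x ∈ lt, ∀ y, phiH x = phiH y → x = y) →
    lt.map phiH = ls.map phiH → lt = ls := by
  intro lt
  induction lt with
  | nil =>
    intro ls _ h
    cases ls with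
    | nil => rfl
    | cons b bs => simp at h
  | cons a as ih =>
    intro ls hinj h
    cases ls with
    | nil => simp at h
    | cons b bs =>
      simp only [List.map_cons, List.cons.injEq] at h
      have h1 : a = b := hinj a (by simp) b h.1
      have h2 : as = bs := ih bs (fun x hx y => hinj x (by simp [hx]) y) h.2
      rw [h1, h2]

lemma phiH_inj_aux : ∀ n, ∀ t : R, sizeOf t ≤ n → ∀ s, phiH t = phiH s → t = s := by
  intro n
  induction n with
  | zero =>
    intro t ht
    exfalso
    cases t <;> simp at ht
  | succ n ih =>
    intro t ht s hts
    cases t with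
    | leaf =>
      cases s with
      | leaf => rfl
      | node s1 s2 q =>
        exfalso
        obtain ⟨p, es, he⟩ := phiH_node_shape s1 s2 q
        rw [he] at hts
        have : ([] : List (HT × List HT)) = p :: es := by
          have : bullet = HT.node (p :: es) := hts
          exact HT.node.inj this
        simp at this
    | node t1 t2 r =>
      cases s with
      | leaf =>
        exfalso
        obtain ⟨p, es, he⟩ := phiH_node_shape t1 t2 r
        rw [he] at hts
        have : (p :: es : List (HT × List HT)) = [] := HT.node.inj hts
        simp at this
      | node s1 s2 q =>
        -- decompositions
        have hneT : (t1 :: t2 :: r) ≠ [] := by simp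
        have hneS : (s1 :: s2 :: q) ≠ [] := by simp
        have htaT : (t1 :: t2 :: r).dropLast ≠ [] := by
          intro hc; have := congrArg List.length hc; simp at this
        have htaS : (s1 :: s2 :: q).dropLast ≠ [] := by
          intro hc; have := congrArg List.length hc; simp at this
        set ta := (t1 :: t2 :: r).dropLast with hta_def
        set sa := (s1 :: s2 :: q).dropLast with hsa_def
        set tn := (t1 :: t2 :: r).getLast hneT with htn_def
        set sn := (s1 :: s2 :: q).getLast hneS with hsn_def
        cases hesT : phiH tn with
        | node esT =>
        cases hesS : phiH sn with
        | node esS =>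
        rw [phiH_node' ta tn htaT esT hesT t1 t2 r
              (List.dropLast_append_getLast hneT).symm,
            phiH_node' sa sn htaS esS hesS s1 s2 q
              (List.dropLast_append_getLast hneS).symm] at hts
        have hts' := HT.node.inj hts
        simp only [List.cons.injEq, Prod.mk.injEq] at hts'
        obtain ⟨⟨hA, hB⟩, hES⟩ := hts'
        have hBd : (ta.map phiH).dropLast = (sa.map phiH).dropLast :=
          List.reverse_injective hB
        have hmap : ta.map phiH = sa.map phiH := by
          have hTne : ta.map phiH ≠ [] := by simpa using htaT
          have hSne : sa.map phiH ≠ [] := by simpa using htaS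
          conv_lhs => rw [← List.dropLast_append_getLast hTne]
          conv_rhs => rw [← List.dropLast_append_getLast hSne]
          rw [hBd, hA]
        have hfull : (t1 :: t2 :: r).map phiH = (s1 :: s2 :: q).map phiH := by
          have e1 : (t1 :: t2 :: r).map phiH = ta.map phiH ++ [phiH tn] := by
            conv_lhs => rw [(List.dropLast_append_getLast hneT).symm]
            rw [List.map_append, List.map_singleton]
          have e2 : (s1 :: s2 :: q).map phiH = sa.map phiH ++ [phiH sn] := by
            conv_lhs => rw [(List.dropLast_append_getLast hneS).symm]
            rw [List.map_append, List.map_singleton]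
          rw [e1, e2, hmap, hesT, hesS, hES]
        have hlist : (t1 :: t2 :: r) = (s1 :: s2 :: q) := by
          apply map_inj_aux _ _ _ hfull
          intro x hx y hxy
          have hsz : sizeOf x < sizeOf (R.node t1 t2 r) := sizeOf_mem_R hx
          exact ih x (by omega) y hxy
        simp only [List.cons.injEq] at hlist
        rw [hlist.1, hlist.2.1, hlist.2.2]

lemma list_preimage : ∀ m : List HT, (∀ x ∈ m, ∃ t, phiH t = x) →
    ∃ rl : List R, rl.map phiH = m := by
  intro m
  induction m with
  | nil => exact fun _ => ⟨[], rfl⟩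
  | cons a as ih =>
    intro hm
    obtain ⟨t, ht⟩ := hm a (by simp)
    obtain ⟨rl, hrl⟩ := ih (fun x hx => hm x (by simp [hx]))
    exact ⟨t :: rl, by simp [ht, hrl]⟩

lemma getLast_eq_of_eq_append (l m : List HT) (a : HT) (hl : l = m ++ [a])
    (h : l ≠ []) : l.getLast h = a := by
  subst hl; simp

lemma phiH_surj_aux : ∀ n, ∀ h : HT, sizeOf h ≤ n → ∃ t, phiH t = h := by
  intro n
  induction n with
  | zero =>
    intro h hh
    exfalso
    cases h with | node l => simp at hh
  | succ n ih =>
    intro h hh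
    cases h with | node l =>
    cases l with
    | nil => exact ⟨R.leaf, rfl⟩
    | cons p es =>
      obtain ⟨e, es'⟩ := p
      have hsz : sizeOf (HT.node ((e, es') :: es)) =
          1 + (1 + (1 + sizeOf e + sizeOf es') + sizeOf es) := by simp
      obtain ⟨te, hte⟩ := ih e (by omega)
      obtain ⟨tn, htn'⟩ := ih (HT.node es) (by simp; omega)
      have hrl : ∃ rl : List R, rl.map phiH = es'.reverse := by
        apply list_preimage
        intro x hx
        rw [List.mem_reverse] at hx
        have hx' := List.sizeOf_lt_of_mem hx
        exact ih x (by omega)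
      obtain ⟨rl, hrl⟩ := hrl
      have hdec : ∃ t1 t2 rest, (rl ++ [te]) ++ [tn] = t1 :: t2 :: rest := by
        match hm : (rl ++ [te]) ++ [tn] with
        | t1 :: t2 :: rest => exact ⟨t1, t2, rest, rfl⟩
        | [] => have := congrArg List.length hm; simp at this
        | [a] => have := congrArg List.length hm; simp at this
      obtain ⟨t1, t2, rest, hd⟩ := hdec
      refine ⟨R.node t1 t2 rest, ?_⟩
      have hta : (rl ++ [te] : List R) ≠ [] := by simp
      rw [phiH_node' (rl ++ [te]) tn hta es htn' t1 t2 rest hd.symm]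
      have hmap : (rl ++ [te]).map phiH = es'.reverse ++ [e] := by
        simp [hrl, hte]
      have h1 : ((rl ++ [te]).map phiH).getLast (by simp) = e :=
        getLast_eq_of_eq_append _ _ _ hmap _
      have h2 : ((rl ++ [te]).map phiH).dropLast.reverse = es' := by
        rw [hmap]; simp
      rw [h1, h2]

/-- the map `Φ̂`, defined by `Φ̂(|) = •` and
`Φ̂(∨(t1,…,tn)) = β(Φ̂(t1),…,Φ̂(tn))`, is a bijection from the set of reduced planar
trees onto the set of planar rooted hypertrees. -/
theorem phiH_bijective : Function.Bijective phiH := by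
  constructor
  · intro t s h
    exact phiH_inj_aux (sizeOf t) t le_rfl s h
  · intro h
    obtain ⟨t, ht⟩ := phiH_surj_aux (sizeOf h) h le_rfl
    exact ⟨t, ht⟩
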